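/- A four-dimensional matrix A = (a_{mnkl}) of complex numbers belongs to the class ([C_f] : M_u) (i.e. for every strongly almost convergent double sequence x the series (Ax)_{mn} = Σ_{k,l} a_{mnkl} x_{kl} bp-converges for each m, n and Ax is bounded) if and only if (1) for each m, n the row A_{mn} = (a_{mnkl})_{k,l} belongs to the β(bp)-dual of [C_f], and (2) sup_{m,n} Σ_{k,l} |a_{mnkl}| < ∞. -/

import Mathlib

open Finset

noncomputable section

/-- The four-dimensional generalized difference matrix `B(r,s,t,u)` acting on a
double sequence `x : ℕ × ℕ → ℂ`; terms with a negative index are taken to be `0`. -/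
def Btrans (r s t u : ℝ) (x : ℕ × ℕ → ℂ) : ℕ × ℕ → ℂ := fun p =>
  (s * u : ℂ) * (if p.1 = 0 ∨ p.2 = 0 then 0 else x (p.1 - 1, p.2 - 1)) +
  (s * t : ℂ) * (if p.1 = 0 then 0 else x (p.1 - 1, p.2)) +
  (r * u : ℂ) * (if p.2 = 0 then 0 else x (p.1, p.2 - 1)) +
  (r * t : ℂ) * x p

/-- `x` is strongly almost convergent to `L` ("[f2]-lim x = L"). -/
def StronglyAlmostConvTo (x : ℕ × ℕ → ℂ) (L : ℂ) : Prop :=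
  ∀ ε > (0 : ℝ), ∃ Q : ℕ, ∀ q q' : ℕ, Q ≤ q → Q ≤ q' → ∀ m n : ℕ,
    (1 / (((q : ℝ) + 1) * ((q' : ℝ) + 1))) *
      ∑ k ∈ Finset.range (q + 1), ∑ l ∈ Finset.range (q' + 1),
        ‖x (m + k, n + l) - L‖ < ε

/-- `x` is almost convergent to `L` ("f2-lim x = L"). -/
def AlmostConvTo (x : ℕ × ℕ → ℂ) (L : ℂ) : Prop :=
  ∀ ε > (0 : ℝ), ∃ Q : ℕ, ∀ q q' : ℕ, Q ≤ q → Q ≤ q' → ∀ m n : ℕ,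
    ‖(1 / (((q : ℂ) + 1) * ((q' : ℂ) + 1))) *
      (∑ k ∈ Finset.range (q + 1), ∑ l ∈ Finset.range (q' + 1), x (m + k, n + l)) - L‖ < ε

/-- The set of values whose supremum is the `[C_f]`-norm of `y`. -/
def CfNormSet (y : ℕ × ℕ → ℂ) : Set ℝ :=
  {v | ∃ q q' m n : ℕ, v = (1 / (((q : ℝ) + 1) * ((q' : ℝ) + 1))) *
    ∑ k ∈ Finset.range (q + 1), ∑ l ∈ Finset.range (q' + 1), ‖y (m + k, n + l)‖}

/-- The `[C_f]`-norm. -/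
def CfNorm (y : ℕ × ℕ → ℂ) : ℝ := sSup (CfNormSet y)

/-- The formal inverse transform of `B(r,s,t,u)`. -/
def Binv (r s t u : ℝ) (y : ℕ × ℕ → ℂ) : ℕ × ℕ → ℂ := fun p =>
  (1 / (r * t : ℂ)) * ∑ k ∈ Finset.range (p.1 + 1), ∑ l ∈ Finset.range (p.2 + 1),
    ((-s : ℂ) / r) ^ (p.1 - k) * ((-u : ℂ) / t) ^ (p.2 - l) * y (k, l)

/-- Pringsheim convergence of a double sequence. -/
def PConvTo (s : ℕ × ℕ → ℂ) (S : ℂ) : Prop :=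
  ∀ ε > (0 : ℝ), ∃ N : ℕ, ∀ m n : ℕ, N ≤ m → N ≤ n → ‖s (m, n) - S‖ < ε

/-- Boundedness of a double sequence. -/
def Bdd2 (s : ℕ × ℕ → ℂ) : Prop := ∃ M : ℝ, ∀ m n : ℕ, ‖s (m, n)‖ ≤ M

/-- bp-convergence: bounded Pringsheim convergence. -/
def BPConvTo (s : ℕ × ℕ → ℂ) (S : ℂ) : Prop := Bdd2 s ∧ PConvTo s S

/-- Rectangular partial sums of a double series. -/
def PartialSums (c : ℕ × ℕ → ℂ) : ℕ × ℕ → ℂ := fun p =>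
  ∑ k ∈ Finset.range (p.1 + 1), ∑ l ∈ Finset.range (p.2 + 1), c (k, l)

/-- bp-convergence of the double series `Σ c_{kl}`. -/
def BPSeriesConv (c : ℕ × ℕ → ℂ) : Prop := ∃ S, BPConvTo (PartialSums c) S

/-- Pringsheim convergence of a real double sequence. -/
def PConvToR (s : ℕ × ℕ → ℝ) (S : ℝ) : Prop :=
  ∀ ε > (0 : ℝ), ∃ N : ℕ, ∀ m n : ℕ, N ≤ m → N ≤ n → |s (m, n) - S| < ε

/-- bp-convergence of a real double sequence. -/
def BPConvToR (s : ℕ × ℕ → ℝ) (S : ℝ) : Prop :=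
  (∃ M : ℝ, ∀ m n : ℕ, |s (m, n)| ≤ M) ∧ PConvToR s S

/-- The rectangle `{(j,k) : m ≤ j ≤ m+p-1, n ≤ k ≤ n+q-1}`. -/
def rectSet (m n p q : ℕ) : Set (ℕ × ℕ) :=
  {jk | m ≤ jk.1 ∧ jk.1 ≤ m + p - 1 ∧ n ≤ jk.2 ∧ jk.2 ≤ n + q - 1}

/-- `E` is uniformly of zero density. -/
def UnifZeroDensity (E : Set (ℕ × ℕ)) : Prop :=
  ∀ ε > (0 : ℝ), ∃ P : ℕ, ∀ p q : ℕ, P ≤ p → P ≤ q → ∀ m n : ℕ,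
    ((E ∩ rectSet m n p q).ncard : ℝ) ≤ ε * p * q

/-- The inner sums `Σ_{j=k}^{m} Σ_{i=l}^{n} (−s/r)^{j−k} (−u/t)^{i−l} a_{ji}`. -/
def innerS (r s t u : ℝ) (a : ℕ × ℕ → ℂ) (k l m n : ℕ) : ℂ :=
  ∑ j ∈ Finset.Icc k m, ∑ i ∈ Finset.Icc l n,
    ((-s : ℂ) / r) ^ (j - k) * ((-u : ℂ) / t) ^ (i - l) * a (j, i)

/-- The matrix `d_{mnkl}(a)` (taken to be `0` when `k > m` or `l > n`). -/
def dmat (r s t u : ℝ) (a : ℕ × ℕ → ℂ) (m n k l : ℕ) : ℂ :=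
  innerS r s t u a k l m n / (r * t : ℂ)

/-- The double difference `Δ₁₁ a_{mnkl}`. -/
def Delta11 (A : ℕ × ℕ → ℕ × ℕ → ℂ) (m n k l : ℕ) : ℂ :=
  A (m, n) (k, l) - A (m, n) (k + 1, l) - A (m, n) (k, l + 1) + A (m, n) (k + 1, l + 1)

/-- The matrix `e_{mnkl}` associated with a four-dimensional matrix `A`
(taken to be `0` when `k > m` or `l > n`). -/
def emat (r s t u : ℝ) (A : ℕ × ℕ → ℕ × ℕ → ℂ) (m n k l : ℕ) : ℂ :=
  ∑ i ∈ Finset.Icc k m, ∑ j ∈ Finset.Icc l n,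
    ((-s : ℂ) / r) ^ (i - k) * ((-u : ℂ) / t) ^ (j - l) * A (m, n) (i, j) / (r * t : ℂ)

/-- `Δ₁₁` applied to the `e`-matrix. -/
def Delta11e (r s t u : ℝ) (A : ℕ × ℕ → ℕ × ℕ → ℂ) (m n k l : ℕ) : ℂ :=
  emat r s t u A m n k l - emat r s t u A m n (k + 1) l -
    emat r s t u A m n k (l + 1) + emat r s t u A m n (k + 1) (l + 1)

end

/-!
Sufficiency: a strongly almost convergent sequence is bounded, say by `C`, so every partial
sum of `(Ax)_{mn}` is at most `M C`.

Necessity: sequences vanishing at infinity are strongly almost convergent to `0`. On the Banach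
space `C₀(ℕ × ℕ, ℂ)` the rows of `A` therefore define continuous linear functionals, as pointwise
limits of the diagonal partial-sum functionals, and these are pointwise bounded because `Ax` is
bounded. By Banach–Steinhaus their norms are bounded by some `C`, and evaluating the `(m, n)`-th
one at the sign sequence of `A (m, n)` on a finite set `F` gives `Σ_F |a_{mnkl}| ≤ C`.
-/

open Filter Topology
open scoped ZeroAtInfty

lemma PConvTo.tendsto_diag {s : ℕ × ℕ → ℂ} {S : ℂ} (h : PConvTo s S) :
    Tendsto (fun N => s (N, N)) atTop (𝓝 S) := by
  rw [Metric.tendsto_atTop]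
  intro ε hε
  obtain ⟨N, hN⟩ := h ε hε
  exact ⟨N, fun n hn => by simpa [Complex.dist_eq] using hN n n hn hn⟩

lemma partialSums_eq_sum_product (c : ℕ × ℕ → ℂ) (m n : ℕ) :
    PartialSums c (m, n) = ∑ p ∈ range (m + 1) ×ˢ range (n + 1), c p := by
  rw [PartialSums, sum_product]

lemma eventually_subset_range_product (F : Finset (ℕ × ℕ)) :
    ∀ᶠ N in atTop, F ⊆ range (N + 1) ×ˢ range (N + 1) := by
  simp only [subset_iff, eventually_all_finset]
  intro p _
  filter_upwards [eventually_ge_atTop (max p.1 p.2)] with N hN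
  simp only [mem_product, mem_range]
  omega

lemma sum_window_eq_sum_Ico {M : Type*} [AddCommMonoid M] (g : ℕ × ℕ → M) (m n q q' : ℕ) :
    ∑ k ∈ range (q + 1), ∑ l ∈ range (q' + 1), g (m + k, n + l) =
      ∑ p ∈ Ico m (m + (q + 1)) ×ˢ Ico n (n + (q' + 1)), g p := by
  simp [sum_product, sum_Ico_eq_sum_range]

lemma StronglyAlmostConvTo.exists_norm_le {x : ℕ × ℕ → ℂ} {L : ℂ}
    (h : StronglyAlmostConvTo x L) : ∃ C, ∀ p, ‖x p‖ ≤ C := by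
  obtain ⟨Q, hQ⟩ := h 1 one_pos
  refine ⟨‖L‖ + (Q + 1) * (Q + 1), fun ⟨m, n⟩ => ?_⟩
  have hwindow := hQ Q Q le_rfl le_rfl m n
  rw [sum_window_eq_sum_Ico (fun p => ‖x p - L‖), one_div_mul_eq_div,
    div_lt_one (by positivity)] at hwindow
  have hsingle : ‖x (m, n) - L‖ ≤
      ∑ p ∈ Ico m (m + (Q + 1)) ×ˢ Ico n (n + (Q + 1)), ‖x p - L‖ :=
    single_le_sum (f := fun p => ‖x p - L‖) (fun _ _ => norm_nonneg _) (by simp)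
  linarith [norm_le_insert' (x (m, n)) L]

lemma sum_window_le {g : ℕ × ℕ → ℝ} {δ : ℝ} (hδ : 0 ≤ δ) (S : Finset (ℕ × ℕ))
    (hS : ∀ p ∉ S, g p ≤ δ) (hg : ∀ p, 0 ≤ g p) (m n q q' : ℕ) :
    ∑ k ∈ range (q + 1), ∑ l ∈ range (q' + 1), g (m + k, n + l) ≤
      (q + 1) * (q' + 1) * δ + ∑ p ∈ S, g p := by
  rw [sum_window_eq_sum_Ico]
  set R := Ico m (m + (q + 1)) ×ˢ Ico n (n + (q' + 1))
  calc ∑ p ∈ R, g p ≤ ∑ p ∈ R, (δ + if p ∈ S then g p else 0) := by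
        refine sum_le_sum fun p _ => ?_
        split_ifs with hp
        · linarith
        · simpa using hS p hp
    _ = (q + 1) * (q' + 1) * δ + ∑ p ∈ R ∩ S, g p := by
        simp [R, sum_add_distrib, sum_ite_mem]
    _ ≤ (q + 1) * (q' + 1) * δ + ∑ p ∈ S, g p := by
        grw [sum_le_sum_of_subset_of_nonneg inter_subset_right fun p _ _ => hg p]

lemma stronglyAlmostConvTo_zero_of_tendsto_cofinite {x : ℕ × ℕ → ℂ}
    (hx : Tendsto x cofinite (𝓝 0)) : StronglyAlmostConvTo x 0 := by
  intro ε hε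
  have hsmall : ∀ᶠ p in cofinite, ‖x p‖ < ε / 2 :=
    (tendsto_zero_iff_norm_tendsto_zero.mp hx).eventually (gt_mem_nhds (half_pos hε))
  set S := (eventually_cofinite.mp hsmall).toFinset
  obtain ⟨Q, hQ⟩ := exists_nat_gt (2 * (∑ p ∈ S, ‖x p‖) / ε)
  refine ⟨Q, fun q q' hq _ m n => ?_⟩
  have hwindow := sum_window_le (g := fun p => ‖x p‖) (half_pos hε).le S
    (fun p hp => (by simpa [S] using hp : ‖x p‖ < ε / 2).le) (fun _ => norm_nonneg _) m n q q'
  have hS : 2 * ∑ p ∈ S, ‖x p‖ < Q * ε := (div_lt_iff₀ hε).mp hQ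
  have harea : ((Q : ℝ) + 1) * ε ≤ (q + 1) * (q' + 1) * ε := by
    gcongr
    nlinarith [(Nat.cast_le (α := ℝ)).mpr hq, Nat.cast_nonneg (α := ℝ) q']
  rw [one_div_mul_eq_div, div_lt_iff₀ (by positivity)]
  simp only [sub_zero]
  linarith

namespace ZeroAtInftyContinuousMap

variable {α : Type*} [TopologicalSpace α]

lemma norm_apply_le (x : C₀(α, ℂ)) (p : α) : ‖x p‖ ≤ ‖x‖ := by
  simpa [norm_toBCF_eq_norm] using x.toBCF.norm_coe_le_norm p

noncomputable def finsetSumCLM (a : α → ℂ) (R : Finset α) : C₀(α, ℂ) →L[ℂ] ℂ :=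
  LinearMap.mkContinuous
    { toFun := fun x => ∑ p ∈ R, a p * x p
      map_add' := fun x y => by simp [mul_add, sum_add_distrib]
      map_smul' := fun c x => by simp [mul_sum, mul_left_comm] }
    (∑ p ∈ R, ‖a p‖) fun x => by
      simp only [LinearMap.coe_mk, AddHom.coe_mk, sum_mul]
      refine (norm_sum_le _ _).trans (sum_le_sum fun p _ => ?_)
      rw [norm_mul]
      exact mul_le_mul_of_nonneg_left (x.norm_apply_le p) (norm_nonneg _)

@[simp]
lemma finsetSumCLM_apply (a : α → ℂ) (R : Finset α) (x : C₀(α, ℂ)) :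
    finsetSumCLM a R x = ∑ p ∈ R, a p * x p := rfl

variable [DiscreteTopology α]

def ofFiniteSupport {β : Type*} [TopologicalSpace β] [Zero β] (f : α → β)
    (hf : (Function.support f).Finite) : C₀(α, β) where
  toFun := f
  continuous_toFun := continuous_of_discreteTopology
  zero_at_infty' := by
    rw [cocompact_eq_cofinite]
    exact tendsto_const_nhds.congr' (eventually_cofinite.mpr (hf.subset fun _ => Ne.symm))

@[simp]
lemma ofFiniteSupport_apply {β : Type*} [TopologicalSpace β] [Zero β] (f : α → β)
    (hf : (Function.support f).Finite) (p : α) : ofFiniteSupport f hf p = f p := rfl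

lemma tendsto_cofinite (x : C₀(α, ℂ)) : Tendsto x cofinite (𝓝 0) := by
  simpa [cocompact_eq_cofinite] using ZeroAtInftyContinuousMapClass.zero_at_infty x

variable [DecidableEq α]

/-- Where `a p = 0` the quotient is `0 / 0 = 0`, so `a p * signSeq a F p = ‖a p‖` on all
of `F` without a case split. -/
noncomputable def signSeq (a : α → ℂ) (F : Finset α) : C₀(α, ℂ) :=
  ofFiniteSupport (fun p => if p ∈ F then star (a p) / ‖a p‖ else 0)
    (F.finite_toSet.subset fun _ hp => by_contra fun h => hp (if_neg h))

lemma norm_signSeq_le (a : α → ℂ) (F : Finset α) : ‖signSeq a F‖ ≤ 1 := by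
  rw [← norm_toBCF_eq_norm, BoundedContinuousFunction.norm_le zero_le_one]
  intro p
  simp only [toBCF, signSeq, BoundedContinuousFunction.coe_mk, ofFiniteSupport_apply]
  split_ifs
  · rw [norm_div, norm_star, Complex.norm_real, norm_norm]
    exact div_self_le_one _
  · simp

lemma sum_mul_signSeq (a : α → ℂ) {F R : Finset α} (hFR : F ⊆ R) :
    ∑ p ∈ R, a p * signSeq a F p = ∑ p ∈ F, (‖a p‖ : ℂ) := by
  have hmul : ∀ p, a p * signSeq a F p = if p ∈ F then (‖a p‖ : ℂ) else 0 := by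
    intro p
    simp only [signSeq, ofFiniteSupport_apply, mul_ite, mul_zero]
    congr 1
    rw [← mul_div_assoc, RCLike.star_def, RCLike.mul_conj, sq]
    exact mul_self_div_self _
  rw [sum_congr rfl fun p _ => hmul p, sum_ite_mem, inter_eq_right.mpr hFR]

end ZeroAtInftyContinuousMap

open ZeroAtInftyContinuousMap

lemma sum_norm_le_opNorm_of_tendsto {a : ℕ × ℕ → ℂ} {f : C₀(ℕ × ℕ, ℂ) →L[ℂ] ℂ}
    (hf : ∀ x : C₀(ℕ × ℕ, ℂ),
      Tendsto (fun N => PartialSums (fun p => a p * x p) (N, N)) atTop (𝓝 (f x)))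
    (F : Finset (ℕ × ℕ)) : ∑ p ∈ F, ‖a p‖ ≤ ‖f‖ := by
  classical
  set x := signSeq a F
  have hfx : f x = ∑ p ∈ F, (‖a p‖ : ℂ) := by
    refine tendsto_nhds_unique (hf x) (tendsto_const_nhds.congr' ?_)
    filter_upwards [eventually_subset_range_product F] with N hN
    rw [partialSums_eq_sum_product, sum_mul_signSeq a hN]
  calc ∑ p ∈ F, ‖a p‖ = ‖f x‖ := by
        rw [hfx, ← Complex.ofReal_sum,
          Complex.norm_of_nonneg (sum_nonneg fun _ _ => norm_nonneg _)]
    _ ≤ ‖f‖ * ‖x‖ := f.le_opNorm x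
    _ ≤ ‖f‖ := mul_le_of_le_one_right (norm_nonneg f) (norm_signSeq_le a F)

theorem exists_sum_norm_le_of_forall_zeroAtInfty (A : ℕ × ℕ → ℕ × ℕ → ℂ)
    (hA : ∀ x : C₀(ℕ × ℕ, ℂ), ∃ y : ℕ × ℕ → ℂ,
      (∀ m n, PConvTo (PartialSums (fun p => A (m, n) p * x p)) (y (m, n))) ∧ Bdd2 y) :
    ∃ M : ℝ, ∀ m n F, ∑ kl ∈ F, ‖A (m, n) kl‖ ≤ M := by
  choose y hy hbdd using hA
  have hlim (mn : ℕ × ℕ) :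
      Tendsto (fun N x => finsetSumCLM (A mn) (range (N + 1) ×ˢ range (N + 1)) x) atTop
        (𝓝 fun x => y x mn) :=
    tendsto_pi_nhds.mpr fun x => by
      simpa [partialSums_eq_sum_product] using (hy x mn.1 mn.2).tendsto_diag
  obtain ⟨C, hC⟩ := banach_steinhaus (g := fun mn => continuousLinearMapOfTendsto _ (hlim mn))
    fun x => let ⟨M, hM⟩ := hbdd x; ⟨M, fun mn => hM mn.1 mn.2⟩
  exact ⟨C, fun m n F =>
    (sum_norm_le_opNorm_of_tendsto (fun x => (hy x m n).tendsto_diag) F).trans (hC (m, n))⟩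

lemma norm_le_of_pConvTo_partialSums {a x : ℕ × ℕ → ℂ} {M C : ℝ} {S : ℂ}
    (hM : ∀ F : Finset (ℕ × ℕ), ∑ p ∈ F, ‖a p‖ ≤ M) (hC : ∀ p, ‖x p‖ ≤ C)
    (hS : PConvTo (PartialSums fun p => a p * x p) S) : ‖S‖ ≤ M * C := by
  have hC0 : 0 ≤ C := (norm_nonneg _).trans (hC 0)
  refine le_of_tendsto' hS.tendsto_diag.norm fun N => ?_
  set R := range (N + 1) ×ˢ range (N + 1)
  calc ‖PartialSums (fun p => a p * x p) (N, N)‖ = ‖∑ p ∈ R, a p * x p‖ := by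
        rw [partialSums_eq_sum_product]
    _ ≤ ∑ p ∈ R, ‖a p‖ * C := by
        refine (norm_sum_le _ _).trans (sum_le_sum fun p _ => ?_)
        rw [norm_mul]
        exact mul_le_mul_of_nonneg_left (hC p) (norm_nonneg _)
    _ ≤ M * C := by
        rw [← sum_mul]
        exact mul_le_mul_of_nonneg_right (hM R) hC0

/-- `A ∈ ([C_f] : M_u)` iff each row of `A` lies in the `β(bp)`-dual of
`[C_f]` and `sup_{m,n} Σ_{k,l} |a_{mnkl}| < ∞`. -/
theorem stmt16 (A : ℕ × ℕ → ℕ × ℕ → ℂ) :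
    -- A ∈ ([C_f] : M_u)
    (∀ x : ℕ × ℕ → ℂ, (∃ L, StronglyAlmostConvTo x L) →
      ∃ y : ℕ × ℕ → ℂ,
        (∀ m n : ℕ, BPConvTo (PartialSums (fun p : ℕ × ℕ => A (m, n) p * x p)) (y (m, n))) ∧
        Bdd2 y) ↔
    -- (1) rows in the β(bp)-dual of [C_f]
    ((∀ m n : ℕ, ∀ x : ℕ × ℕ → ℂ, (∃ L, StronglyAlmostConvTo x L) →
        BPSeriesConv (fun p : ℕ × ℕ => A (m, n) p * x p)) ∧
    -- (2) sup_{m,n} Σ_{k,l} |a_{mnkl}| < ∞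
    (∃ M : ℝ, ∀ m n : ℕ, ∀ F : Finset (ℕ × ℕ),
        ∑ kl ∈ F, ‖A (m, n) kl‖ ≤ M)) := by
  constructor
  · intro hA
    refine ⟨fun m n x hx => ?_, exists_sum_norm_le_of_forall_zeroAtInfty A fun x => ?_⟩
    · obtain ⟨y, hy, -⟩ := hA x hx
      exact ⟨y (m, n), hy m n⟩
    · obtain ⟨y, hy, hbdd⟩ :=
        hA x ⟨0, stronglyAlmostConvTo_zero_of_tendsto_cofinite x.tendsto_cofinite⟩
      exact ⟨y, fun m n => (hy m n).2, hbdd⟩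
  · rintro ⟨hrow, M, hM⟩ x hx
    obtain ⟨C, hC⟩ := hx.elim fun _ hL => hL.exists_norm_le
    choose y hy using fun m n => hrow m n x hx
    exact ⟨fun p => y p.1 p.2, hy,
      M * C, fun m n => norm_le_of_pConvTo_partialSums (hM m n) hC (hy m n).2⟩
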